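/- Let V be a maximum edge-disjoint triangle packing of a finite simple graph G and let ψ ∈ V. Then the number of edges of ψ that are base edges of ψ (i.e., base edges of some triangle singly-attached to ψ) is not equal to 2. In other words, there is no solution triangle of type 2. -/
import Mathlib


open Finset

/-- The edge set of a triangle `t` (a set of vertices): all unordered pairs of
distinct vertices of `t`. -/
def triEdges {V : Type*} [DecidableEq V] (t : Finset V) : Finset (Sym2 V) :=
  t.sym2.filter (fun e => ¬ e.IsDiag)

/-- `P` is a collection of pairwise edge-disjoint triangles of `G`. -/
def IsTrianglePacking {V : Type*} [DecidableEq V] (G : SimpleGraph V)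
    (P : Finset (Finset V)) : Prop :=
  (∀ t ∈ P, G.IsNClique 3 t) ∧
    ∀ t₁ ∈ P, ∀ t₂ ∈ P, t₁ ≠ t₂ → Disjoint (triEdges t₁) (triEdges t₂)

/-- The triangle packing number `ν(G)`: the maximum number of pairwise
edge-disjoint triangles in `G`. -/
noncomputable def packingNumber {V : Type*} [DecidableEq V] (G : SimpleGraph V) : ℕ :=
  sSup {n | ∃ P : Finset (Finset V), IsTrianglePacking G P ∧ P.card = n}

/-- `P` is a maximum edge-disjoint triangle packing of `G`. -/
def IsMaxTrianglePacking {V : Type*} [DecidableEq V] (G : SimpleGraph V)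
    (P : Finset (Finset V)) : Prop :=
  IsTrianglePacking G P ∧
    ∀ Q : Finset (Finset V), IsTrianglePacking G Q → Q.card ≤ P.card

/-- `t` is a triangle of `G`, not in the packing `P`, and `ψ` is the unique
member of `P` sharing an edge with `t`. -/
def SinglyAttached {V : Type*} [DecidableEq V] (G : SimpleGraph V)
    (P : Finset (Finset V)) (t ψ : Finset V) : Prop :=
  G.IsNClique 3 t ∧ t ∉ P ∧ ψ ∈ P ∧ (triEdges t ∩ triEdges ψ).Nonempty ∧
    ∀ ψ' ∈ P, (triEdges t ∩ triEdges ψ').Nonempty → ψ' = ψ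

/-- The base edges of a solution triangle `ψ ∈ P`: the edges of `ψ` that are
shared with some triangle singly-attached to `ψ`. -/
def baseEdges {V : Type*} [DecidableEq V] (G : SimpleGraph V)
    (P : Finset (Finset V)) (ψ : Finset V) : Set (Sym2 V) :=
  {e | e ∈ triEdges ψ ∧ ∃ t, SinglyAttached G P t ψ ∧ e ∈ triEdges t}

lemma mem_triEdges {V : Type*} [DecidableEq V] {t : Finset V} {u v : V} :
    s(u,v) ∈ triEdges t ↔ u ∈ t ∧ v ∈ t ∧ u ≠ v := by
  simp [triEdges, Finset.mem_sym2_iff]; tauto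

lemma triEdges_triple {V : Type*} [DecidableEq V] {a b c : V} (hab : a≠b) (hac : a≠c) (hbc : b≠c) :
    triEdges ({a,b,c} : Finset V) = {s(a,b), s(a,c), s(b,c)} := by
  ext e
  induction e with
  | _ u v => simp [mem_triEdges, Sym2.eq_iff]; aesop

lemma exists_third {V : Type*} [DecidableEq V] {t : Finset V} {u v : V}
    (hcard : t.card = 3) (hu : u ∈ t) (hv : v ∈ t) (huv : u ≠ v) :
    ∃ w, w ≠ u ∧ w ≠ v ∧ t = {u, v, w} := by
  have hsub : ({u, v} : Finset V) ⊆ t := by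
    intro z hz; simp at hz; rcases hz with rfl | rfl <;> assumption
  have hc2 : ({u, v} : Finset V).card = 2 := Finset.card_pair huv
  have hdc : (t \ {u, v}).card = 1 := by
    rw [Finset.card_sdiff_of_subset hsub, hcard, hc2]
  obtain ⟨w, hw⟩ := Finset.card_eq_one.mp hdc
  have hwmem : w ∈ t \ ({u, v} : Finset V) := by rw [hw]; simp
  simp only [Finset.mem_sdiff, Finset.mem_insert, Finset.mem_singleton] at hwmem
  refine ⟨w, fun h => hwmem.2 (Or.inl h), fun h => hwmem.2 (Or.inr h), ?_⟩
  have := Finset.union_sdiff_of_subset hsub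
  rw [hw] at this
  rw [← this]
  ext z; simp [or_assoc]

lemma core {V : Type*} [Fintype V] [DecidableEq V]
    (G : SimpleGraph V) (P : Finset (Finset V))
    (hP : IsMaxTrianglePacking G P) (ψ : Finset V) (hψ : ψ ∈ P)
    (a b c : V) (hab : a ≠ b) (hac : a ≠ c) (hbc : b ≠ c) (hψeq : ψ = {a,b,c})
    (h1 : s(a,b) ∈ baseEdges G P ψ) (h2 : s(b,c) ∈ baseEdges G P ψ) :
    s(a,c) ∈ baseEdges G P ψ := by
  obtain ⟨-, t1, hsa1, he1t1⟩ := h1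
  obtain ⟨-, t2, hsa2, he2t2⟩ := h2
  obtain ⟨ht1cl, ht1P, -, -, huniq1⟩ := hsa1
  obtain ⟨ht2cl, ht2P, -, -, huniq2⟩ := hsa2
  rw [mem_triEdges] at he1t1 he2t2
  obtain ⟨x, hxa, hxb, ht1eq⟩ := exists_third ht1cl.2 he1t1.1 he1t1.2.1 hab
  obtain ⟨y, hyb, hyc, ht2eq⟩ := exists_third ht2cl.2 he2t2.1 he2t2.2.1 hbc
  have hxc : x ≠ c := by
    rintro rfl
    exact ht1P (by rw [ht1eq, ← hψeq]; exact hψ)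
  have hya : y ≠ a := by
    rintro rfl
    refine ht2P ?_
    have : t2 = ψ := by rw [ht2eq, hψeq]; ext z; simp; tauto
    rw [this]; exact hψ
  -- adjacency facts
  have ht1cl' := ht1eq ▸ ht1cl
  have ht2cl' := ht2eq ▸ ht2cl
  rw [SimpleGraph.is3Clique_triple_iff] at ht1cl' ht2cl'
  have hψcl := hψeq ▸ (hP.1.1 ψ hψ)
  rw [SimpleGraph.is3Clique_triple_iff] at hψcl
  -- uniqueness for any packing member other than ψ
  have D2 : ∀ t, G.IsNClique 3 t → (∀ ψ' ∈ P, (triEdges t ∩ triEdges ψ').Nonempty → ψ' = ψ) →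
      ∀ ψ' ∈ P, ψ' ≠ ψ → Disjoint (triEdges t) (triEdges ψ') := by
    intro t _ huniq ψ' hψ' hne
    by_contra hd
    rw [Finset.not_disjoint_iff_nonempty_inter] at hd
    exact hne (huniq ψ' hψ' hd)
  by_cases hxy : x = y
  · -- anchors coincide: third triangle {a,c,x} is singly attached via edge s(a,c)
    subst hxy
    have ht3cl : G.IsNClique 3 ({a,c,x} : Finset V) := by
      rw [SimpleGraph.is3Clique_triple_iff]
      exact ⟨hψcl.2.1, ht1cl'.2.1, ht2cl'.2.2⟩
    have haxmem : s(a,x) ∈ triEdges t1 := by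
      rw [ht1eq, mem_triEdges]; simp [Ne.symm hxa]
    have hcxmem : s(c,x) ∈ triEdges t2 := by
      rw [ht2eq, mem_triEdges]; simp [Ne.symm hxc]
    have hax3 : s(a,x) ∈ triEdges ({a,c,x} : Finset V) := by
      rw [mem_triEdges]; simp [Ne.symm hxa]
    have hcx3 : s(c,x) ∈ triEdges ({a,c,x} : Finset V) := by
      rw [mem_triEdges]; simp [Ne.symm hxc]
    have hac3 : s(a,c) ∈ triEdges ({a,c,x} : Finset V) := by
      rw [mem_triEdges]; simp [hac]
    have hacψ : s(a,c) ∈ triEdges ψ := by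
      rw [hψeq, mem_triEdges]; simp [hac]
    have ht3P : ({a,c,x} : Finset V) ∉ P := by
      intro hmem
      have : ({a,c,x} : Finset V) = ψ := huniq1 _ hmem ⟨s(a,x), Finset.mem_inter.mpr ⟨haxmem, hax3⟩⟩
      have hx : x ∈ ψ := by rw [← this]; simp
      rw [hψeq] at hx; simp at hx
      rcases hx with h | h | h
      exacts [hxa h, hxb h, hxc h]
    have huniq3 : ∀ ψ' ∈ P, (triEdges ({a,c,x} : Finset V) ∩ triEdges ψ').Nonempty → ψ' = ψ := by
      intro ψ' hψ' ⟨e, he⟩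
      rw [Finset.mem_inter] at he
      have he3 := he.1
      rw [triEdges_triple hac (Ne.symm hxa) (Ne.symm hxc)] at he3
      simp only [Finset.mem_insert, Finset.mem_singleton] at he3
      rcases he3 with rfl | rfl | rfl
      · by_contra hne
        have hdisj := hP.1.2 ψ hψ ψ' hψ' (Ne.symm hne)
        exact (Finset.disjoint_left.mp hdisj hacψ) he.2
      · exact huniq1 ψ' hψ' ⟨s(a,x), Finset.mem_inter.mpr ⟨haxmem, he.2⟩⟩
      · exact huniq2 ψ' hψ' ⟨s(c,x), Finset.mem_inter.mpr ⟨hcxmem, he.2⟩⟩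
    exact ⟨hacψ, {a,c,x}, ⟨ht3cl, ht3P, hψ, ⟨s(a,c), Finset.mem_inter.mpr ⟨hac3, hacψ⟩⟩, huniq3⟩, hac3⟩
  · -- anchors differ: exchange ψ for t1, t2 — contradiction with maximality
    exfalso
    have hxψ : x ∉ ({a,b,c} : Finset V) := by simp [hxa, hxb, hxc]
    have hyψ : y ∉ ({a,b,c} : Finset V) := by simp [hya, hyb, hyc]
    have ht1t2 : t1 ≠ t2 := by
      intro h
      have : a ∈ t2 := by rw [← h, ht1eq]; simp
      rw [ht2eq] at this; simp at this
      rcases this with h | h | h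
      exacts [hab h, hac h, hya h.symm]
    have hd12 : Disjoint (triEdges t1) (triEdges t2) := by
      rw [ht1eq, ht2eq, triEdges_triple hab (Ne.symm hxa) (Ne.symm hxb),
        triEdges_triple hbc (Ne.symm hyb) (Ne.symm hyc)]
      rw [Finset.disjoint_left]
      intro e he he'
      simp only [Finset.mem_insert, Finset.mem_singleton] at he he'
      rcases he with rfl | rfl | rfl <;> rcases he' with h | h | h <;>
        rw [Sym2.eq_iff] at h <;> tauto
    set Q : Finset (Finset V) := insert t1 (insert t2 (P.erase ψ)) with hQ
    have ht1nm : t1 ∉ insert t2 (P.erase ψ) := by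
      simp only [Finset.mem_insert, Finset.mem_erase]
      rintro (h | ⟨-, h⟩)
      exacts [ht1t2 h, ht1P h]
    have ht2nm : t2 ∉ P.erase ψ := fun h => ht2P (Finset.mem_of_mem_erase h)
    have hQcard : Q.card = P.card + 1 := by
      rw [hQ, Finset.card_insert_of_notMem ht1nm, Finset.card_insert_of_notMem ht2nm,
        Finset.card_erase_of_mem hψ]
      have : 1 ≤ P.card := Finset.card_pos.mpr ⟨ψ, hψ⟩
      omega
    have hQpack : IsTrianglePacking G Q := by
      constructor
      · intro t ht
        rw [hQ] at ht
        simp only [Finset.mem_insert, Finset.mem_erase] at ht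
        rcases ht with rfl | rfl | ⟨-, h⟩
        exacts [ht1cl, ht2cl, hP.1.1 _ h]
      · intro s hs t ht hst
        rw [hQ] at hs ht
        simp only [Finset.mem_insert, Finset.mem_erase] at hs ht
        rcases hs with rfl | rfl | ⟨hsne, hsP⟩ <;> rcases ht with rfl | rfl | ⟨htne, htP⟩
        · exact absurd rfl hst
        · exact hd12
        · exact D2 s ht1cl huniq1 t htP htne
        · exact hd12.symm
        · exact absurd rfl hst
        · exact D2 s ht2cl huniq2 t htP htne
        · exact (D2 t ht1cl huniq1 s hsP hsne).symm
        · exact (D2 t ht2cl huniq2 s hsP hsne).symm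
        · exact hP.1.2 s hsP t htP hst
    have := hP.2 Q hQpack
    omega

/-- There is no solution triangle of type 2: no member of a maximum packing has
exactly two base edges. -/
theorem no_type_two {V : Type*} [Fintype V] [DecidableEq V]
    (G : SimpleGraph V) (P : Finset (Finset V))
    (hP : IsMaxTrianglePacking G P) (ψ : Finset V) (hψ : ψ ∈ P) :
    (baseEdges G P ψ).ncard ≠ 2 := by
  intro hcard
  obtain ⟨e1, e2, hne, hset⟩ := Set.ncard_eq_two.mp hcard
  have hψcl := hP.1.1 ψ hψ
  obtain ⟨a, b, c, hab, hac, hbc, hψeq⟩ := Finset.card_eq_three.mp hψcl.2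
  have he1 : e1 ∈ baseEdges G P ψ := by rw [hset]; left; rfl
  have he2 : e2 ∈ baseEdges G P ψ := by rw [hset]; right; rfl
  have hmem : ∀ e ∈ baseEdges G P ψ, e = s(a,b) ∨ e = s(a,c) ∨ e = s(b,c) := by
    intro e he
    have h := he.1
    rw [hψeq, triEdges_triple hab hac hbc] at h
    simpa using h
  have key := core G P hP ψ hψ
  have swap : ∀ u v : V, s(u,v) = s(v,u) := fun u v => Sym2.eq_swap
  rcases hmem e1 he1 with rfl | rfl | rfl <;> rcases hmem e2 he2 with h | h | h <;>
    (try subst h)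
  · exact hne rfl
  · -- e1 = s(a,b), e2 = s(a,c)
    have hthird := key b a c hab.symm hbc hac
      (by rw [hψeq]; ext z; simp; tauto) (by rw [swap]; exact he1) he2
    rw [hset] at hthird
    simp only [Set.mem_insert_iff, Set.mem_singleton_iff, Sym2.eq_iff] at hthird
    tauto
  · -- e1 = s(a,b), e2 = s(b,c)
    have hthird := key a b c hab hac hbc hψeq he1 he2
    rw [hset] at hthird
    simp only [Set.mem_insert_iff, Set.mem_singleton_iff, Sym2.eq_iff] at hthird
    tauto
  · -- e1 = s(a,c), e2 = s(a,b)
    have hthird := key c a b hac.symm hbc.symm hab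
      (by rw [hψeq]; ext z; simp; tauto) (by rw [swap]; exact he1) he2
    rw [hset] at hthird
    simp only [Set.mem_insert_iff, Set.mem_singleton_iff, Sym2.eq_iff] at hthird
    tauto
  · exact hne rfl
  · -- e1 = s(a,c), e2 = s(b,c)
    have hthird := key a c b hac hab hbc.symm
      (by rw [hψeq]; ext z; simp; tauto) he1 (by rw [swap]; exact he2)
    rw [hset] at hthird
    simp only [Set.mem_insert_iff, Set.mem_singleton_iff, Sym2.eq_iff] at hthird
    tauto
  · -- e1 = s(b,c), e2 = s(a,b)
    have hthird := key c b a hbc.symm hac.symm hab.symm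
      (by rw [hψeq]; ext z; simp; tauto) (by rw [swap]; exact he1) (by rw [swap]; exact he2)
    rw [hset] at hthird
    simp only [Set.mem_insert_iff, Set.mem_singleton_iff, Sym2.eq_iff] at hthird
    tauto
  · -- e1 = s(b,c), e2 = s(a,c)
    have hthird := key b c a hbc hab.symm hac.symm
      (by rw [hψeq]; ext z; simp; tauto) he1 (by rw [swap]; exact he2)
    rw [hset] at hthird
    simp only [Set.mem_insert_iff, Set.mem_singleton_iff, Sym2.eq_iff] at hthird
    tauto
  · exact hne rfl
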